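/- arXiv:2406.12283 — 5 statements merged into one kernel-verified Lean document; each statement's English description precedes it below -/
import Mathlib

section
/- Let k ≥ 2 be an integer and define f : ℕ → ℤ by f(n) = μ(m) if n = m^k for some positive integer m, and f(n) = 0 otherwise. Then the Dirichlet convolution f∗d equals d^{(k)}; that is, for every positive integer n, ∑_{mq = n} f(m) d(q) = d^{(k)}(n). -/
open Finset ArithmeticFunction

/-- The number of positive divisors of `n`. -/
def numDiv (n : ℕ) : ℕ := n.divisors.card

open Classical in
/-- `d^{(k)}(n)`: the number of `k`-free divisors of `n`. -/
noncomputable def kfreeDiv (k n : ℕ) : ℕ :=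
  (n.divisors.filter (fun d => ∀ p : ℕ, p.Prime → ¬ p ^ k ∣ d)).card

open Classical in
/-- Indicator of `k`-free numbers as an arithmetic function. -/
noncomputable def kfreeInd (k : ℕ) : ArithmeticFunction ℤ :=
  ⟨fun n => if n ≠ 0 ∧ ∀ p : ℕ, p.Prime → ¬ p ^ k ∣ n then 1 else 0, by simp⟩

open Classical in
/-- Auxiliary: sum of moebius over `m` with `m^k ∣ N` detects `k`-freeness. -/
lemma sum_moebius_floorRoot (k N : ℕ) (hk : k ≠ 0) (hN : N ≠ 0) :
    ∑ m ∈ (Nat.floorRoot k N).divisors, (ArithmeticFunction.moebius m : ℤ) =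
      if ∀ p : ℕ, p.Prime → ¬ p ^ k ∣ N then 1 else 0 := by
  have hM : Nat.floorRoot k N ≠ 0 := Nat.floorRoot_ne_zero.2 ⟨hk, hN⟩
  have h1 : Nat.floorRoot k N = 1 ↔ ∀ p : ℕ, p.Prime → ¬ p ^ k ∣ N := by
    constructor
    · intro h p hp hpk
      have : p ∣ Nat.floorRoot k N := Nat.pow_dvd_iff_dvd_floorRoot.1 hpk
      rw [h, Nat.dvd_one] at this
      exact hp.ne_one this
    · intro h
      by_contra hne
      obtain ⟨p, hp, hpd⟩ := Nat.exists_prime_and_dvd hne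
      exact h p hp (Nat.pow_dvd_iff_dvd_floorRoot.2 hpd)
  have := congrArg (fun g : ArithmeticFunction ℤ => g (Nat.floorRoot k N))
    ArithmeticFunction.moebius_mul_coe_zeta
  simp only [ArithmeticFunction.coe_mul_zeta_apply] at this
  rw [this, ArithmeticFunction.one_apply]
  exact if_congr h1 rfl rfl

open Classical in
/-- Key: summing `f` over the divisors of `N` gives the `k`-free indicator. -/
lemma sum_f_divisors (k : ℕ) (hk : 2 ≤ k) (f : ℕ → ℤ)
    (hf1 : ∀ m : ℕ, 0 < m → f (m ^ k) = ArithmeticFunction.moebius m)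
    (hf2 : ∀ n : ℕ, (¬ ∃ m : ℕ, 0 < m ∧ n = m ^ k) → f n = 0)
    (N : ℕ) (hN : N ≠ 0) :
    ∑ d ∈ N.divisors, f d = if ∀ p : ℕ, p.Prime → ¬ p ^ k ∣ N then 1 else 0 := by
  have hk0 : k ≠ 0 := by omega
  have hM : Nat.floorRoot k N ≠ 0 := Nat.floorRoot_ne_zero.2 ⟨hk0, hN⟩
  have hsub : ((Nat.floorRoot k N).divisors.image (· ^ k)) ⊆ N.divisors := by
    intro d hd
    simp only [mem_image] at hd
    obtain ⟨m, hm, rfl⟩ := hd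
    rw [Nat.mem_divisors] at hm ⊢
    exact ⟨Nat.pow_dvd_iff_dvd_floorRoot.2 hm.1, hN⟩
  have hinj : Set.InjOn (· ^ k) ((Nat.floorRoot k N).divisors : Set ℕ) := fun a _ b _ h =>
    Nat.pow_left_injective (by omega) h
  rw [← Finset.sum_subset hsub, Finset.sum_image (fun a ha b hb h => hinj ha hb h)]
  · calc ∑ m ∈ (Nat.floorRoot k N).divisors, f (m ^ k)
        = ∑ m ∈ (Nat.floorRoot k N).divisors, (ArithmeticFunction.moebius m : ℤ) := by
          refine Finset.sum_congr rfl fun m hm => ?_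
          exact hf1 m (Nat.pos_of_mem_divisors hm)
      _ = _ := sum_moebius_floorRoot k N hk0 hN
  · intro d hd hnot
    apply hf2
    rintro ⟨m, hm, rfl⟩
    apply hnot
    rw [Finset.mem_image]
    refine ⟨m, ?_, rfl⟩
    rw [Nat.mem_divisors]
    exact ⟨Nat.pow_dvd_iff_dvd_floorRoot.1 (Nat.mem_divisors.1 hd).1, hM⟩

theorem conv_moebius_pow_d_eq_kfree (k : ℕ) (hk : 2 ≤ k) (f : ℕ → ℤ)
    (hf1 : ∀ m : ℕ, 0 < m → f (m ^ k) = ArithmeticFunction.moebius m)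
    (hf2 : ∀ n : ℕ, (¬ ∃ m : ℕ, 0 < m ∧ n = m ^ k) → f n = 0) :
    ∀ n : ℕ, 0 < n →
      ∑ mq ∈ n.divisorsAntidiagonal, f mq.1 * (numDiv mq.2 : ℤ) = (kfreeDiv k n : ℤ) := by
  classical
  intro n hn
  set F : ArithmeticFunction ℤ := ⟨fun n => if n = 0 then 0 else f n, by simp⟩ with hF
  have hFapp : ∀ m : ℕ, m ≠ 0 → F m = f m := fun m hm => by simp [hF, hm]
  -- F * ζ = kfreeInd k
  have hFz : (F * (ArithmeticFunction.zeta : ArithmeticFunction ℕ) : ArithmeticFunction ℤ)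
      = kfreeInd k := by
    ext N
    rw [ArithmeticFunction.coe_mul_zeta_apply]
    rcases eq_or_ne N 0 with rfl | hN
    · simp [kfreeInd]
    · have : ∑ i ∈ N.divisors, F i = ∑ i ∈ N.divisors, f i := by
        refine Finset.sum_congr rfl fun i hi => hFapp i (Nat.pos_of_mem_divisors hi).ne'
      rw [this, sum_f_divisors k hk f hf1 hf2 N hN]
      simp [kfreeInd, hN]
  have hkey : ((F * (ArithmeticFunction.zeta : ArithmeticFunction ℕ))
      * (ArithmeticFunction.zeta : ArithmeticFunction ℕ) : ArithmeticFunction ℤ) n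
      = (kfreeDiv k n : ℤ) := by
    rw [hFz, ArithmeticFunction.coe_mul_zeta_apply]
    rw [kfreeDiv, Finset.card_filter]
    push_cast
    refine Finset.sum_congr rfl fun d hd => ?_
    have hd0 : d ≠ 0 := (Nat.pos_of_mem_divisors hd).ne'
    simp only [kfreeInd, ArithmeticFunction.coe_mk, hd0, ne_eq, not_false_eq_true, true_and]
  rw [← hkey, mul_assoc, ArithmeticFunction.mul_apply]
  refine Finset.sum_congr rfl fun mq hmq => ?_
  obtain ⟨heq, hne⟩ := Nat.mem_divisorsAntidiagonal.1 hmq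
  have h1 : mq.1 ≠ 0 := left_ne_zero_of_mul (heq ▸ hne)
  have h2 : mq.2 ≠ 0 := right_ne_zero_of_mul (heq ▸ hne)
  rw [hFapp mq.1 h1]
  congr 1
  rw [ArithmeticFunction.coe_zeta_mul_apply]
  have : ∑ i ∈ mq.2.divisors,
        ((ArithmeticFunction.zeta : ArithmeticFunction ℕ) : ArithmeticFunction ℤ) i
      = ∑ i ∈ mq.2.divisors, (1 : ℤ) :=
    Finset.sum_congr rfl fun i hi => by
      rw [ArithmeticFunction.natCoe_apply,
        ArithmeticFunction.zeta_apply_ne (Nat.pos_of_mem_divisors hi).ne', Nat.cast_one]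
  rw [this, Finset.sum_const, numDiv]
  simp
end

section
/- Let a be a nonzero integer. There exists a constant C > 0 depending only on a such that for every integer m ≥ 2, c_m ≤ C · log m. -/
open Finset

/-- Real value of the Riemann zeta function at a real `s > 1`, as the series
`∑_{n=1}^∞ 1/n^s`. -/
noncomputable def zetaR (s : ℝ) : ℝ := ∑' n : ℕ, 1 / (n + 1 : ℝ) ^ s

/-- The constant `c_m` from Felix's theorem, for a fixed nonzero integer `a`:
`(ζ(2)ζ(3)/ζ(6)) ∏_{p∣a} (1 − p/(p²−p+1)) ∏_{p∣m} (1 + (p−1)/(p²−p+1))`. -/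
noncomputable def cConst (a : ℤ) (m : ℕ) : ℝ :=
  (zetaR 2 * zetaR 3 / zetaR 6) *
    (∏ p ∈ a.natAbs.primeFactors, (1 - (p : ℝ) / ((p : ℝ) ^ 2 - p + 1))) *
    ∏ p ∈ m.primeFactors, (1 + ((p : ℝ) - 1) / ((p : ℝ) ^ 2 - p + 1))

/-- Each Euler-type factor is nonnegative (it is at least 1). -/
lemma one_le_factor (p : ℕ) (hp : p.Prime) :
    (1 : ℝ) ≤ 1 + ((p : ℝ) - 1) / ((p : ℝ) ^ 2 - p + 1) := by
  have h2 : (2 : ℝ) ≤ p := by exact_mod_cast hp.two_le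
  have hden : (0 : ℝ) < (p : ℝ) ^ 2 - p + 1 := by nlinarith
  have : (0 : ℝ) ≤ ((p : ℝ) - 1) / ((p : ℝ) ^ 2 - p + 1) :=
    div_nonneg (by linarith) hden.le
  linarith

/-- Each factor is at most `1/p + 1`. -/
lemma factor_le (p : ℕ) (hp : p.Prime) :
    1 + ((p : ℝ) - 1) / ((p : ℝ) ^ 2 - p + 1) ≤ 1 / (p : ℝ) + 1 := by
  have h2 : (2 : ℝ) ≤ p := by exact_mod_cast hp.two_le
  have hden : (0 : ℝ) < (p : ℝ) ^ 2 - p + 1 := by nlinarith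
  have hp0 : (0 : ℝ) < p := by linarith
  have : ((p : ℝ) - 1) / ((p : ℝ) ^ 2 - p + 1) ≤ 1 / (p : ℝ) := by
    rw [div_le_div_iff₀ hden hp0]
    nlinarith
  linarith

/-- The product over primes dividing `m` of `1/p + 1` is at most the sum of `1/d`
over divisors `d` of `m`. -/
lemma prod_le_sum_divisors (m : ℕ) (hm : m ≠ 0) :
    ∏ p ∈ m.primeFactors, (1 / (p : ℝ) + 1) ≤ ∑ d ∈ m.divisors, (1 : ℝ) / d := by
  classical
  rw [Finset.prod_add]
  simp only [Finset.prod_const_one, mul_one]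
  have hrw : ∀ t ∈ m.primeFactors.powerset,
      (∏ p ∈ t, (1 / (p : ℝ))) = (1 : ℝ) / ((∏ p ∈ t, p : ℕ) : ℝ) := by
    intro t _
    simp [Nat.cast_prod, one_div, Finset.prod_inv_distrib]
  rw [Finset.sum_congr rfl hrw]
  have hinj : Set.InjOn (fun t : Finset ℕ => ∏ p ∈ t, p) m.primeFactors.powerset := by
    intro t1 h1 t2 h2 h
    simp only [Finset.coe_powerset, Set.mem_preimage, Set.mem_powerset_iff,
      Finset.coe_subset] at h1 h2
    have hp1 : ∀ p ∈ t1, p.Prime := fun p hp => Nat.prime_of_mem_primeFactors (h1 hp)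
    have hp2 : ∀ p ∈ t2, p.Prime := fun p hp => Nat.prime_of_mem_primeFactors (h2 hp)
    have h' : (∏ p ∈ t1, p) = ∏ p ∈ t2, p := h
    have := Nat.primeFactors_prod hp1
    rw [h', Nat.primeFactors_prod hp2] at this
    exact this.symm
  rw [← Finset.sum_image (f := fun d : ℕ => (1 : ℝ) / (d : ℝ)) (g := fun t : Finset ℕ => ∏ p ∈ t, p)
    (fun t h1 t2 h2 h => hinj h1 h2 h)]
  apply Finset.sum_le_sum_of_subset_of_nonneg
  · intro d hd
    simp only [Finset.mem_image] at hd
    obtain ⟨t, ht, rfl⟩ := hd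
    rw [Finset.mem_powerset] at ht
    rw [Nat.mem_divisors]
    refine ⟨?_, hm⟩
    calc (∏ p ∈ t, p) ∣ ∏ p ∈ m.primeFactors, p :=
          Finset.prod_dvd_prod_of_subset _ _ _ ht
      _ ∣ m := Nat.prod_primeFactors_dvd m
  · intro d _ _
    positivity

/-- The sum of `1/d` over divisors of `m` is at most `1 + log m`. -/
lemma sum_divisors_le (m : ℕ) (hm : 1 ≤ m) :
    ∑ d ∈ m.divisors, (1 : ℝ) / d ≤ 1 + Real.log m := by
  have h1 : ∑ d ∈ m.divisors, (1 : ℝ) / d ≤ ∑ d ∈ Finset.Icc 1 m, (1 : ℝ) / d := by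
    apply Finset.sum_le_sum_of_subset_of_nonneg
    · intro d hd
      have hpos := Nat.pos_of_mem_divisors hd
      rw [Nat.mem_divisors] at hd
      exact Finset.mem_Icc.mpr ⟨hpos, Nat.le_of_dvd (Nat.pos_of_ne_zero hd.2) hd.1⟩
    · intro d _ _; positivity
  have h2 : ((harmonic m : ℚ) : ℝ) = ∑ d ∈ Finset.Icc 1 m, (1 : ℝ) / d := by
    rw [harmonic_eq_sum_Icc]
    push_cast
    simp [one_div]
  calc ∑ d ∈ m.divisors, (1 : ℝ) / d ≤ ∑ d ∈ Finset.Icc 1 m, (1 : ℝ) / d := h1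
    _ = ((harmonic m : ℚ) : ℝ) := h2.symm
    _ ≤ 1 + Real.log m := harmonic_le_one_add_log m

theorem cConst_le_log (a : ℤ) (ha : a ≠ 0) :
    ∃ C : ℝ, 0 < C ∧ ∀ m : ℕ, 2 ≤ m → cConst a m ≤ C * Real.log m := by
  set K : ℝ := (zetaR 2 * zetaR 3 / zetaR 6) *
    (∏ p ∈ a.natAbs.primeFactors, (1 - (p : ℝ) / ((p : ℝ) ^ 2 - p + 1))) with hK
  refine ⟨3 * max 1 K, by positivity, ?_⟩
  intro m hm
  have hm1 : (1 : ℝ) ≤ m := by exact_mod_cast le_trans (by norm_num) hm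
  have hlog2 : (1 : ℝ) / 2 < Real.log 2 := by
    have := Real.log_two_gt_d9
    linarith
  have hlogm : (1 : ℝ) / 2 < Real.log m := by
    refine lt_of_lt_of_le hlog2 (Real.log_le_log (by norm_num) ?_)
    exact_mod_cast hm
  have hP0 : (0 : ℝ) ≤ ∏ p ∈ m.primeFactors, (1 + ((p : ℝ) - 1) / ((p : ℝ) ^ 2 - p + 1)) := by
    apply Finset.prod_nonneg
    intro p hp
    exact le_trans zero_le_one (one_le_factor p (Nat.prime_of_mem_primeFactors hp))
  have hPle : ∏ p ∈ m.primeFactors, (1 + ((p : ℝ) - 1) / ((p : ℝ) ^ 2 - p + 1))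
      ≤ 1 + Real.log m := by
    calc ∏ p ∈ m.primeFactors, (1 + ((p : ℝ) - 1) / ((p : ℝ) ^ 2 - p + 1))
        ≤ ∏ p ∈ m.primeFactors, (1 / (p : ℝ) + 1) := by
          apply Finset.prod_le_prod
          · intro p hp
            exact le_trans zero_le_one (one_le_factor p (Nat.prime_of_mem_primeFactors hp))
          · intro p hp
            exact factor_le p (Nat.prime_of_mem_primeFactors hp)
      _ ≤ ∑ d ∈ m.divisors, (1 : ℝ) / d := prod_le_sum_divisors m (by omega)
      _ ≤ 1 + Real.log m := sum_divisors_le m (by omega)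
  have hcc : cConst a m = K * ∏ p ∈ m.primeFactors,
      (1 + ((p : ℝ) - 1) / ((p : ℝ) ^ 2 - p + 1)) := rfl
  rw [hcc]
  rcases le_or_gt K 0 with hKneg | hKpos
  · have : K * ∏ p ∈ m.primeFactors, (1 + ((p : ℝ) - 1) / ((p : ℝ) ^ 2 - p + 1)) ≤ 0 :=
      mul_nonpos_of_nonpos_of_nonneg hKneg hP0
    have hC : (0 : ℝ) ≤ 3 * max 1 K * Real.log m := by
      have : (0:ℝ) < max 1 K := lt_of_lt_of_le one_pos (le_max_left _ _)
      positivity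
    linarith
  · calc K * ∏ p ∈ m.primeFactors, (1 + ((p : ℝ) - 1) / ((p : ℝ) ^ 2 - p + 1))
        ≤ K * (1 + Real.log m) := by
          exact mul_le_mul_of_nonneg_left hPle hKpos.le
      _ ≤ max 1 K * (1 + Real.log m) := by
          apply mul_le_mul_of_nonneg_right (le_max_right _ _)
          linarith
      _ ≤ max 1 K * (3 * Real.log m) := by
          apply mul_le_mul_of_nonneg_left (by linarith) (le_trans zero_le_one (le_max_left _ _))
      _ = 3 * max 1 K * Real.log m := by ring
end

section
/- For every complex number s with Re(s) > 1, the series ∑_{n=1}^∞ P(n)/n^s converges absolutely and equals ζ(s)²/ζ(s+1). -/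
open Finset

/-- The proper Pillai function `P(n) = (1/n) ∑_{k=1}^n gcd(k,n)`. -/
noncomputable def pillai (n : ℕ) : ℝ :=
  (∑ k ∈ Finset.Icc 1 n, (Nat.gcd k n : ℝ)) / n

/-!
Grouping `k` by `d = gcd(k, n)`, each divisor `d` of `n` occurs `φ(n/d)` times, so
`P(n) = ∑_{d ∣ n} φ(d)/d`, i.e. `P = (φ/id) ⋆ 1`. Since `φ ⋆ 1 = id`, the Dirichlet series of `φ`
is `ζ(s-1)/ζ(s)`, hence that of `φ/id` is `ζ(s)/ζ(s+1)`, and multiplying by `ζ(s)` gives the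
series of `P`.
-/

open LSeries Complex
open scoped LSeries.notation

theorem Nat.sum_Icc_gcd_eq_sum_divisors (n : ℕ) :
    ∑ k ∈ Icc 1 n, k.gcd n = ∑ d ∈ n.divisors, d * (n / d).totient := by
  rcases n.eq_zero_or_pos with rfl | hn
  · simp
  -- the term `k = n` is moved to `k = 0`, where `totient_div_of_dvd` counts it
  have h_range : ∑ k ∈ Icc 1 n, k.gcd n = ∑ k ∈ range n, n.gcd k := by
    rw [← Finset.Ico_add_one_right_eq_Icc, sum_Ico_succ_top hn, range_eq_Ico,
      sum_eq_sum_Ico_succ_bot hn]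
    simp only [Nat.gcd_comm, Nat.gcd_self, Nat.gcd_zero_right]
    ring
  rw [h_range, ← sum_fiberwise_of_maps_to (g := n.gcd) (t := n.divisors)
    fun k _ ↦ Nat.mem_divisors.mpr ⟨Nat.gcd_dvd_left n k, hn.ne'⟩]
  refine sum_congr rfl fun d hd ↦ ?_
  rw [sum_congr rfl fun k hk ↦ (mem_filter.mp hk).2, sum_const, smul_eq_mul, mul_comm,
    Nat.totient_div_of_dvd (Nat.dvd_of_mem_divisors hd)]

theorem pillai_eq_sum_divisors (n : ℕ) :
    pillai n = ∑ d ∈ n.divisors, (d.totient : ℝ) / d := by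
  rw [pillai, ← Nat.sum_div_divisors n fun d ↦ (d.totient : ℝ) / d, ← Nat.cast_sum]
  push_cast [Nat.sum_Icc_gcd_eq_sum_divisors, sum_div]
  refine sum_congr rfl fun d hd ↦ ?_
  obtain ⟨⟨e, rfl⟩, hn⟩ := Nat.mem_divisors.mp hd
  have hd0 : d ≠ 0 := left_ne_zero_of_mul hn
  rw [Nat.mul_div_cancel_left e (Nat.pos_of_ne_zero hd0)]
  push_cast
  rw [mul_div_mul_left _ _ (Nat.cast_ne_zero.mpr hd0)]

theorem LSeries.term_mul_cpow (f : ℕ → ℂ) (a s : ℂ) :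
    term (fun n ↦ f n * n ^ a) s = term f (s - a) := by
  ext n
  rcases eq_or_ne n 0 with rfl | hn
  · simp
  have hn' : (n : ℂ) ≠ 0 := Nat.cast_ne_zero.mpr hn
  rw [term_of_ne_zero hn, term_of_ne_zero hn, cpow_sub _ _ hn', div_div_eq_mul_div]

theorem LSeriesHasSum_mul_cpow_iff {f : ℕ → ℂ} {a s c : ℂ} :
    LSeriesHasSum (fun n ↦ f n * n ^ a) s c ↔ LSeriesHasSum f (s - a) c := by
  rw [LSeriesHasSum, LSeriesHasSum, term_mul_cpow]

theorem LSeriesHasSum_natCast {s : ℂ} (hs : 2 < s.re) :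
    LSeriesHasSum (fun n : ℕ ↦ (n : ℂ)) s (riemannZeta (s - 1)) := by
  have h := LSeriesHasSum_mul_cpow_iff (f := 1) (a := 1) |>.mpr <|
    LSeriesHasSum_one (s := s - 1) (by simp; linarith)
  simpa using h

theorem natCast_totient_convolution_one :
    (fun n : ℕ ↦ (n.totient : ℂ)) ⍟ 1 = fun n : ℕ ↦ (n : ℂ) := by
  ext n
  simp only [convolution_def, Pi.one_apply, mul_one]
  rw [Nat.sum_divisorsAntidiagonal (f := fun d _ ↦ (d.totient : ℂ))]
  exact_mod_cast n.sum_totient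

theorem LSeriesHasSum_totient {s : ℂ} (hs : 2 < s.re) :
    LSeriesHasSum (fun n ↦ (n.totient : ℂ)) s (riemannZeta (s - 1) / riemannZeta s) := by
  have hs1 : 1 < s.re := by linarith
  have h_id := LSeriesHasSum_natCast hs
  have h_summable : LSeriesSummable (fun n ↦ (n.totient : ℂ)) s :=
    h_id.LSeriesSummable.norm.of_norm_bounded fun n ↦ norm_term_le s <| by
      simpa using n.totient_le
  have h_conv := h_summable.LSeriesHasSum.convolution (LSeriesHasSum_one hs1)
  rw [natCast_totient_convolution_one] at h_conv
  rw [h_id.unique h_conv, mul_div_cancel_right₀ _ (riemannZeta_ne_zero_of_one_lt_re hs1)]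
  exact h_summable.LSeriesHasSum

-- `n ^ (-1 : ℂ)` rather than `/ n`, so that `LSeriesHasSum_mul_cpow_iff` applies.
theorem pillai_eq_convolution :
    (fun n ↦ (pillai n : ℂ)) = (fun n : ℕ ↦ (n.totient : ℂ) * n ^ (-1 : ℂ)) ⍟ 1 := by
  ext n
  simp only [convolution_def, Pi.one_apply, mul_one, cpow_neg_one, pillai_eq_sum_divisors]
  rw [Nat.sum_divisorsAntidiagonal (f := fun d _ ↦ (d.totient : ℂ) * (d : ℂ)⁻¹)]
  push_cast
  simp [div_eq_mul_inv]

theorem LSeriesHasSum_pillai {s : ℂ} (hs : 1 < s.re) :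
    LSeriesHasSum (fun n ↦ (pillai n : ℂ)) s (riemannZeta s ^ 2 / riemannZeta (s + 1)) := by
  have h_totient : LSeriesHasSum (fun n : ℕ ↦ (n.totient : ℂ) * n ^ (-1 : ℂ)) s
      (riemannZeta s / riemannZeta (s + 1)) := by
    rw [LSeriesHasSum_mul_cpow_iff, sub_neg_eq_add]
    simpa using LSeriesHasSum_totient (s := s + 1) (by simp; linarith)
  rw [pillai_eq_convolution, sq, mul_div_right_comm]
  exact h_totient.convolution (LSeriesHasSum_one hs)

theorem LSeriesHasSum.hasSum_nat_add_one {f : ℕ → ℂ} {s c : ℂ} (h : LSeriesHasSum f s c) :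
    HasSum (fun n : ℕ ↦ f (n + 1) / ((n : ℂ) + 1) ^ s) c := by
  simpa [term_of_ne_zero] using (hasSum_nat_add_iff' 1).mpr h

theorem pillai_dirichlet_series (s : ℂ) (hs : 1 < s.re) :
    Summable (fun n : ℕ => ‖(pillai (n + 1) : ℂ) / (n + 1 : ℂ) ^ s‖) ∧
    ∑' n : ℕ, (pillai (n + 1) : ℂ) / (n + 1 : ℂ) ^ s =
      riemannZeta s ^ 2 / riemannZeta (s + 1) := by
  have h := (LSeriesHasSum_pillai hs).hasSum_nat_add_one
  exact ⟨h.summable.norm, h.tsum_eq⟩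
end

section
/- Let f : ℕ → ℂ be an arithmetic function and let α > 0 be such that the series ∑_{n=1}^∞ |f(n)|/n^{1−α} converges. Let a be a nonzero integer and let B ≥ 2/α be real. Then there is a constant C > 0 (depending only on f, a and B) such that for all real x ≥ 3, ∑_{(log x)^B < m ≤ x−a} |f(m)| · ( ∑_{q ≤ (x−a)/m} d(q) ) ≤ C · x / log x, where m and q run over positive integers. -/
/-!
If `m > (log x)^B` then `m^α ≥ (log x)^(αB) ≥ (log x)^2`, so `|f(m)|/m ≤ w(m) (log x)^(-2)` with the
summable weights `w(m) = |f(m)|/m^(1-α)`. Dirichlet's bound `∑_{q ≤ t} d(q) ≤ t (1 + log t)`, which comes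
from `∑_{q ≤ N} d(q) = ∑_{d ≤ N} ⌊N/d⌋ ≤ N H_N`, makes the `m`-th term at most
`|f(m)|/m · O(x log x) ≤ w(m) · O(x / log x)`, and summing over `m` gives the claim.
-/

open Finset

lemma numDiv_eq_card_filter_dvd {q N : ℕ} (hq : q ∈ Icc 1 N) :
    numDiv q = #{d ∈ Icc 1 N | d ∣ q} := by
  rw [mem_Icc] at hq
  unfold numDiv
  congr 1
  ext d
  simp only [Nat.mem_divisors, mem_filter, mem_Icc]
  constructor
  · rintro ⟨hdq, -⟩
    exact ⟨⟨Nat.pos_of_dvd_of_pos hdq hq.1, (Nat.le_of_dvd hq.1 hdq).trans hq.2⟩, hdq⟩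
  · rintro ⟨-, hdq⟩
    exact ⟨hdq, by omega⟩

lemma sum_numDiv_Icc_eq_sum_div (N : ℕ) : ∑ q ∈ Icc 1 N, numDiv q = ∑ d ∈ Icc 1 N, N / d := by
  rw [sum_congr rfl fun q hq => numDiv_eq_card_filter_dvd hq]
  simp only [card_filter]
  rw [sum_comm]
  refine sum_congr rfl fun d _ => ?_
  rw [← card_filter, ← Nat.Ioc_filter_dvd_card_eq_div, ← Icc_add_one_left_eq_Ioc, zero_add]

lemma sum_numDiv_Icc_le (N : ℕ) :
    ∑ q ∈ Icc 1 N, (numDiv q : ℝ) ≤ N * (1 + Real.log N) :=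
  calc ∑ q ∈ Icc 1 N, (numDiv q : ℝ) = ∑ d ∈ Icc 1 N, ((N / d : ℕ) : ℝ) := by
        exact_mod_cast sum_numDiv_Icc_eq_sum_div N
    _ ≤ ∑ d ∈ Icc 1 N, (N : ℝ) * (d : ℝ)⁻¹ :=
        sum_le_sum fun d _ => Nat.cast_div_le.trans_eq (div_eq_mul_inv _ _)
    _ = N * harmonic N := by rw [← mul_sum, harmonic_eq_sum_Icc]; push_cast; rfl
    _ ≤ N * (1 + Real.log N) := by gcongr; exact harmonic_le_one_add_log N

lemma sum_numDiv_Icc_floor_le {t T : ℝ} (ht : 0 ≤ t) (htT : t ≤ T) (hT : 1 ≤ T) :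
    ∑ q ∈ Icc 1 ⌊t⌋₊, (numDiv q : ℝ) ≤ t * (1 + Real.log T) := by
  obtain hN | hN := Nat.eq_zero_or_pos ⌊t⌋₊
  · rw [hN, Icc_eq_empty (by omega), sum_empty]
    have := Real.log_nonneg hT
    positivity
  have hNt : (⌊t⌋₊ : ℝ) ≤ t := Nat.floor_le ht
  calc _ ≤ (⌊t⌋₊ : ℝ) * (1 + Real.log ⌊t⌋₊) := sum_numDiv_Icc_le _
    _ ≤ t * (1 + Real.log T) := by
        have : 0 ≤ Real.log ⌊t⌋₊ := Real.log_natCast_nonneg _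
        gcongr
        exact hNt.trans htT

lemma sq_le_rpow_of_rpow_le {L m α B : ℝ} (hL : 1 ≤ L) (hα : 0 ≤ α) (hBα : 2 ≤ B * α)
    (hm : L ^ B ≤ m) : L ^ 2 ≤ m ^ α :=
  calc L ^ 2 = L ^ (2 : ℝ) := (Real.rpow_two L).symm
    _ ≤ L ^ (B * α) := Real.rpow_le_rpow_of_exponent_le hL hBα
    _ = (L ^ B) ^ α := Real.rpow_mul (by linarith) _ _
    _ ≤ m ^ α := by gcongr

lemma mul_sum_numDiv_floor_div_le {z y T L α B : ℝ} {m : ℕ} (hz : 0 ≤ z) (hy : 0 ≤ y)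
    (hyT : y ≤ T) (hT : 1 ≤ T) (hL : 1 ≤ L) (hα : 0 ≤ α) (hBα : 2 ≤ B * α) (hm : L ^ B ≤ m) :
    z * ∑ q ∈ Icc 1 ⌊y / m⌋₊, (numDiv q : ℝ) ≤
      z / (m : ℝ) ^ (1 - α) * (T * (1 + Real.log T) / L ^ 2) := by
  have hm1 : 1 ≤ (m : ℝ) := (Real.one_le_rpow hL (by nlinarith)).trans hm
  have hm0 : 0 < (m : ℝ) := by linarith
  have hlogT : 0 ≤ 1 + Real.log T := by linarith [Real.log_nonneg hT]
  have hym : y / m ≤ T := (div_le_self hy hm1).trans hyT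
  have hmα : L ^ 2 ≤ (m : ℝ) ^ α := sq_le_rpow_of_rpow_le hL hα hBα hm
  have hsplit : (m : ℝ) = (m : ℝ) ^ (1 - α) * (m : ℝ) ^ α := by
    rw [← Real.rpow_add hm0, sub_add_cancel, Real.rpow_one]
  calc z * ∑ q ∈ Icc 1 ⌊y / m⌋₊, (numDiv q : ℝ) ≤ z * (y / m * (1 + Real.log T)) := by
        gcongr
        exact sum_numDiv_Icc_floor_le (by positivity) hym hT
    _ ≤ z * (T / m * (1 + Real.log T)) := by gcongr
    _ = z / (m : ℝ) ^ (1 - α) * (T * (1 + Real.log T) / (m : ℝ) ^ α) := by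
        nth_rw 1 [hsplit]; ring
    _ ≤ z / (m : ℝ) ^ (1 - α) * (T * (1 + Real.log T) / L ^ 2) := by gcongr

lemma mul_one_add_log_mul_div_sq_le {c x : ℝ} (hc : 1 ≤ c) (hx0 : 0 < x)
    (hx : 1 ≤ Real.log x) :
    c * x * (1 + Real.log (c * x)) / Real.log x ^ 2 ≤ c * (2 + Real.log c) * x / Real.log x := by
  have hlog : 1 + Real.log (c * x) ≤ (2 + Real.log c) * Real.log x := by
    rw [Real.log_mul (by positivity) hx0.ne']
    nlinarith [Real.log_nonneg hc]
  calc c * x * (1 + Real.log (c * x)) / Real.log x ^ 2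
      ≤ c * x * ((2 + Real.log c) * Real.log x) / Real.log x ^ 2 := by gcongr
    _ = c * (2 + Real.log c) * x / Real.log x := by field_simp

theorem tail_sum_estimate_general (f : ℕ → ℂ) (α : ℝ) (hα : 0 < α)
    (hf : Summable fun n : ℕ => ‖f (n + 1)‖ / (n + 1 : ℝ) ^ (1 - α))
    (a : ℤ) (B : ℝ) (hB : 2 / α ≤ B) :
    ∃ C : ℝ, 0 < C ∧ ∀ x : ℝ, 3 ≤ x →
      ∑ m ∈ (Finset.Icc 1 ⌊x - (a : ℝ)⌋₊).filter
          (fun m : ℕ => Real.log x ^ B < (m : ℝ)),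
        ‖f m‖ * ∑ q ∈ Finset.Icc 1 ⌊(x - (a : ℝ)) / (m : ℝ)⌋₊, (numDiv q : ℝ) ≤
      C * x / Real.log x := by
  set w : ℕ → ℝ := fun n => ‖f n‖ / (n : ℝ) ^ (1 - α)
  have hw : ∀ n, 0 ≤ w n := fun n => by positivity
  have hw_summable : Summable w := (summable_nat_add_iff 1).mp (by simpa [w] using hf)
  set c : ℝ := 1 + |(a : ℝ)|
  have hc : 1 ≤ c := le_add_of_nonneg_right (abs_nonneg _)
  have h2c : 0 < 2 + Real.log c := by linarith [Real.log_nonneg hc]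
  have hW : 0 ≤ ∑' n, w n := tsum_nonneg hw
  refine ⟨c * (2 + Real.log c) * (∑' n, w n + 1), by positivity, fun x hx => ?_⟩
  have hx0 : 0 < x := by linarith
  have hL : 1 ≤ Real.log x := by
    rw [Real.le_log_iff_exp_le hx0]
    linarith [Real.exp_one_lt_d9]
  have hBα : 2 ≤ B * α := by rwa [div_le_iff₀ hα] at hB
  set S := (Icc 1 ⌊x - (a : ℝ)⌋₊).filter (fun m : ℕ => Real.log x ^ B < (m : ℝ)) with hS
  have hterm : ∀ m ∈ S, ‖f m‖ * ∑ q ∈ Icc 1 ⌊(x - (a : ℝ)) / (m : ℝ)⌋₊, (numDiv q : ℝ) ≤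
      w m * (c * (2 + Real.log c) * x / Real.log x) := by
    intro m hm
    simp only [hS, mem_filter, mem_Icc] at hm
    obtain ⟨⟨hm1, hmy⟩, hmB⟩ := hm
    have hy : 1 ≤ x - a := (Nat.one_le_floor_iff _).mp (hm1.trans hmy)
    have hyc : x - a ≤ c * x := by nlinarith [neg_abs_le (a : ℝ), abs_nonneg (a : ℝ)]
    exact (mul_sum_numDiv_floor_div_le (norm_nonneg _) (by linarith) hyc (by nlinarith) hL
      hα.le hBα hmB.le).trans
      (mul_le_mul_of_nonneg_left (mul_one_add_log_mul_div_sq_le hc hx0 hL) (hw m))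
  calc _ ≤ ∑ m ∈ S, w m * (c * (2 + Real.log c) * x / Real.log x) := sum_le_sum hterm
    _ = (∑ m ∈ S, w m) * (c * (2 + Real.log c) * x / Real.log x) := (sum_mul _ _ _).symm
    _ ≤ (∑' n, w n + 1) * (c * (2 + Real.log c) * x / Real.log x) := by
        gcongr
        linarith [hw_summable.sum_le_tsum S fun n _ => hw n]
    _ = c * (2 + Real.log c) * (∑' n, w n + 1) * x / Real.log x := by ring

theorem tail_sum_estimate (f : ℕ → ℂ) (α : ℝ) (hα : 0 < α)
    (hf : Summable fun n : ℕ => ‖f (n + 1)‖ / (n + 1 : ℝ) ^ (1 - α))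
    (a : ℤ) (ha : a ≠ 0) (B : ℝ) (hB : 2 / α ≤ B) :
    ∃ C : ℝ, 0 < C ∧ ∀ x : ℝ, 3 ≤ x →
      ∑ m ∈ (Finset.Icc 1 ⌊x - (a : ℝ)⌋₊).filter
          (fun m : ℕ => Real.log x ^ B < (m : ℝ)),
        ‖f m‖ * ∑ q ∈ Finset.Icc 1 ⌊(x - (a : ℝ)) / (m : ℝ)⌋₊, (numDiv q : ℝ) ≤
      C * x / Real.log x :=
  tail_sum_estimate_general f α hα hf a B hB
end

section
/- Let f : ℕ → ℂ be an arithmetic function and let α > 0 be such that the series ∑_{n=1}^∞ |f(n)|/n^{1−α} converges. Let a be a nonzero integer. Then there is a constant C > 0 (depending only on f, a and α) such that for every real y ≥ 2, | ∑_{m > y} f(m) c_m / m | ≤ C / y^{α/2}; in particular the series c_f = ∑_{m=1}^∞ f(m) c_m / m converges absolutely. -/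
open Finset

/-!
The `a`-dependent factor of `c_m` has absolute value at most `1`, and every Euler factor
`1 + (p - 1)/(p² - p + 1)` lies in `[1, 2]`. A product over `p ∣ m` of factors bounded by a
constant `B` is `O(m^ε)` for every `ε > 0`: the primes `p ≥ B^{1/ε}` contribute at most
`∏ p^ε ≤ m^ε`, the others a bounded amount. Hence `|c_m| ≪ m^{α/2}`, so
`|f(m) c_m / m| ≪ (|f(m)| / m^{1-α}) · m^{-α/2}`, and on the tail `m > y` the last factor is
at most `y^{-α/2}`.
-/

noncomputable def cFactor (x : ℝ) : ℝ := 1 + (x - 1) / (x ^ 2 - x + 1)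

lemma sq_sub_self_add_one_pos (x : ℝ) : 0 < x ^ 2 - x + 1 := by
  nlinarith [sq_nonneg (x - 1 / 2)]

lemma one_le_cFactor {x : ℝ} (hx : 1 ≤ x) : 1 ≤ cFactor x := by
  unfold cFactor
  have : 0 ≤ (x - 1) / (x ^ 2 - x + 1) :=
    div_nonneg (by linarith) (sq_sub_self_add_one_pos x).le
  linarith

lemma cFactor_le_two (x : ℝ) : cFactor x ≤ 2 := by
  unfold cFactor
  have : (x - 1) / (x ^ 2 - x + 1) ≤ 1 := by
    rw [div_le_one (sq_sub_self_add_one_pos x)]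
    nlinarith [sq_nonneg (x - 1)]
  linarith

lemma abs_one_sub_div_sq_sub_self_add_one_le_one {x : ℝ} (hx : 0 ≤ x) :
    |1 - x / (x ^ 2 - x + 1)| ≤ 1 := by
  have hd := sq_sub_self_add_one_pos x
  have h0 : 0 ≤ x / (x ^ 2 - x + 1) := div_nonneg hx hd.le
  have h1 : x / (x ^ 2 - x + 1) ≤ 1 := by
    rw [div_le_one hd]
    nlinarith [sq_nonneg (x - 1)]
  rw [abs_le]
  constructor <;> linarith

lemma abs_cConst_le (a : ℤ) (m : ℕ) :
    |cConst a m| ≤ |zetaR 2 * zetaR 3 / zetaR 6| * ∏ p ∈ m.primeFactors, cFactor p := by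
  have hEuler : 0 ≤ ∏ p ∈ m.primeFactors, cFactor p :=
    prod_nonneg fun p hp => zero_le_one.trans <|
      one_le_cFactor (by exact_mod_cast (Nat.prime_of_mem_primeFactors hp).one_lt.le)
  have ha : |∏ p ∈ a.natAbs.primeFactors, (1 - (p : ℝ) / ((p : ℝ) ^ 2 - p + 1))| ≤ 1 := by
    rw [abs_prod]
    exact prod_le_one (fun _ _ => abs_nonneg _)
      fun p _ => abs_one_sub_div_sq_sub_self_add_one_le_one p.cast_nonneg
  change |_ * _ * ∏ p ∈ m.primeFactors, cFactor p| ≤ _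
  rw [abs_mul, abs_mul, abs_of_nonneg hEuler]
  gcongr
  exact mul_le_of_le_one_right (abs_nonneg _) ha

section PrimeFactorProduct

variable {g : ℕ → ℝ} {B : ℝ}

lemma prod_filter_primeFactors_lt_le_pow (hB : 1 ≤ B) (hg0 : ∀ p, p.Prime → 0 ≤ g p)
    (hgB : ∀ p, p.Prime → g p ≤ B) (m T : ℕ) :
    ∏ p ∈ m.primeFactors with p < T, g p ≤ B ^ T := calc
  ∏ p ∈ m.primeFactors with p < T, g p ≤ ∏ p ∈ m.primeFactors with p < T, B :=
    prod_le_prod (fun p hp => hg0 p (Nat.prime_of_mem_primeFactors (mem_filter.1 hp).1))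
      fun p hp => hgB p (Nat.prime_of_mem_primeFactors (mem_filter.1 hp).1)
  _ = B ^ #{p ∈ m.primeFactors | p < T} := prod_const B
  _ ≤ B ^ T := by
    refine pow_le_pow_right₀ hB ((card_le_card fun p hp => ?_).trans (card_range T).le)
    exact mem_range.2 (mem_filter.1 hp).2

lemma prod_filter_primeFactors_le_rpow {ε : ℝ} (hε : 0 < ε) (hg0 : ∀ p, p.Prime → 0 ≤ g p)
    (hgB : ∀ p, p.Prime → g p ≤ B) {m : ℕ} (hm : m ≠ 0) {T : ℕ} (hT : B ^ (1 / ε) ≤ T) :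
    ∏ p ∈ m.primeFactors with ¬p < T, g p ≤ (m : ℝ) ^ ε := by
  have hlarge : ∀ p ∈ m.primeFactors.filter (¬· < T), g p ≤ (p : ℝ) ^ ε := by
    intro p hp
    obtain ⟨hpm, hpT⟩ := mem_filter.1 hp
    have hp := Nat.prime_of_mem_primeFactors hpm
    have hBp : B ^ (1 / ε) ≤ p := hT.trans (by exact_mod_cast not_lt.1 hpT)
    calc g p ≤ B := hgB p hp
      _ ≤ (B ^ (1 / ε)) ^ ε := by
        rw [← Real.rpow_mul ((hg0 p hp).trans (hgB p hp)), one_div_mul_cancel hε.ne',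
          Real.rpow_one]
      _ ≤ (p : ℝ) ^ ε := by
        gcongr
        exact Real.rpow_nonneg ((hg0 p hp).trans (hgB p hp)) _
  have hdvd : ∏ p ∈ m.primeFactors with ¬p < T, p ∣ m :=
    (prod_dvd_prod_of_subset _ _ _ (filter_subset _ _)).trans (Nat.prod_primeFactors_dvd m)
  calc ∏ p ∈ m.primeFactors with ¬p < T, g p
      ≤ ∏ p ∈ m.primeFactors with ¬p < T, (p : ℝ) ^ ε :=
        prod_le_prod (fun p hp => hg0 p (Nat.prime_of_mem_primeFactors (mem_filter.1 hp).1))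
          hlarge
    _ = ((∏ p ∈ m.primeFactors with ¬p < T, p : ℕ) : ℝ) ^ ε := by
        rw [Real.finsetProd_rpow _ _ fun p _ => p.cast_nonneg, Nat.cast_prod]
    _ ≤ (m : ℝ) ^ ε := by
        gcongr
        exact_mod_cast Nat.le_of_dvd (Nat.pos_of_ne_zero hm) hdvd

lemma exists_prod_primeFactors_le_mul_rpow (hB : 1 ≤ B) {ε : ℝ} (hε : 0 < ε)
    (hg0 : ∀ p, p.Prime → 0 ≤ g p) (hgB : ∀ p, p.Prime → g p ≤ B) :
    ∃ K : ℝ, 0 < K ∧ ∀ m : ℕ, m ≠ 0 → ∏ p ∈ m.primeFactors, g p ≤ K * (m : ℝ) ^ ε := by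
  set T := ⌈B ^ (1 / ε)⌉₊
  refine ⟨B ^ T, by positivity, fun m hm => ?_⟩
  rw [← prod_filter_mul_prod_filter_not m.primeFactors (· < T)]
  exact mul_le_mul (prod_filter_primeFactors_lt_le_pow hB hg0 hgB m T)
    (prod_filter_primeFactors_le_rpow hε hg0 hgB hm (Nat.le_ceil _))
    (prod_nonneg fun p hp => hg0 p (Nat.prime_of_mem_primeFactors (mem_filter.1 hp).1))
    (by positivity)

end PrimeFactorProduct

lemma exists_abs_cConst_le_mul_rpow (a : ℤ) {ε : ℝ} (hε : 0 < ε) :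
    ∃ D : ℝ, 0 ≤ D ∧ ∀ m : ℕ, m ≠ 0 → |cConst a m| ≤ D * (m : ℝ) ^ ε := by
  obtain ⟨K, hK, hprod⟩ := exists_prod_primeFactors_le_mul_rpow one_le_two hε
    (g := fun p => cFactor p)
    (fun p hp => zero_le_one.trans (one_le_cFactor (by exact_mod_cast hp.one_lt.le)))
    (fun p _ => cFactor_le_two p)
  refine ⟨|zetaR 2 * zetaR 3 / zetaR 6| * K, by positivity, fun m hm => ?_⟩
  rw [mul_assoc]
  exact (abs_cConst_le a m).trans (mul_le_mul_of_nonneg_left (hprod m hm) (abs_nonneg _))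

lemma norm_mul_div_le_of_abs_le_mul_rpow {z : ℂ} {c x D α : ℝ} (hx : 0 < x)
    (hc : |c| ≤ D * x ^ (α / 2)) :
    ‖z * c / x‖ ≤ D * (‖z‖ / x ^ (1 - α)) / x ^ (α / 2) := by
  have hsplit : x ^ (1 - α) * x ^ (α / 2) * x ^ (α / 2) = x := by
    rw [← Real.rpow_add hx, ← Real.rpow_add hx, show 1 - α + α / 2 + α / 2 = 1 by ring,
      Real.rpow_one]
  rw [norm_div, norm_mul, Complex.norm_real, Real.norm_eq_abs, Complex.norm_real,
    Real.norm_of_nonneg hx.le]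
  calc ‖z‖ * |c| / x ≤ ‖z‖ * (D * x ^ (α / 2)) / x := by gcongr
    _ = D * (‖z‖ / x ^ (1 - α)) / x ^ (α / 2) := by
      nth_rewrite 2 [← hsplit]
      field_simp

section Tail

variable {E : Type*} [NormedAddCommGroup E] {u : ℕ → E} {v : ℕ → ℝ} {β : ℝ}

lemma nonneg_of_norm_le_div_rpow (hu : ∀ m : ℕ, ‖u m‖ ≤ v m / ((m : ℝ) + 1) ^ β) (m : ℕ) :
    0 ≤ v m := by
  have h := (norm_nonneg _).trans (hu m)
  rwa [le_div_iff₀ (by positivity), zero_mul] at h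

lemma summable_norm_of_le_div_rpow (hv : Summable v) (hβ : 0 ≤ β)
    (hu : ∀ m : ℕ, ‖u m‖ ≤ v m / ((m : ℝ) + 1) ^ β) : Summable fun m => ‖u m‖ :=
  hv.of_nonneg_of_le (fun _ => norm_nonneg _) fun m => (hu m).trans <|
    div_le_self (nonneg_of_norm_le_div_rpow hu m)
      (Real.one_le_rpow (le_add_of_nonneg_left m.cast_nonneg) hβ)

lemma norm_tsum_ite_lt_le_div_rpow (hv : Summable v) (hβ : 0 ≤ β)
    (hu : ∀ m : ℕ, ‖u m‖ ≤ v m / ((m : ℝ) + 1) ^ β) {y : ℝ} (hy : 0 < y) :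
    ‖∑' m : ℕ, if y < (m : ℝ) + 1 then u m else 0‖ ≤ (∑' m, v m) / y ^ β := by
  have hterm : ∀ m : ℕ, ‖if y < (m : ℝ) + 1 then u m else 0‖ ≤ v m / y ^ β := by
    intro m
    split_ifs with hym
    · refine (hu m).trans (div_le_div_of_nonneg_left (nonneg_of_norm_le_div_rpow hu m)
        (by positivity) (Real.rpow_le_rpow hy.le hym.le hβ))
    · rw [norm_zero]
      exact div_nonneg (nonneg_of_norm_le_div_rpow hu m) (by positivity)
  have hsum := (hv.div_const (y ^ β)).of_nonneg_of_le (fun _ => norm_nonneg _) hterm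
  calc ‖∑' m : ℕ, if y < (m : ℝ) + 1 then u m else 0‖
      ≤ ∑' m : ℕ, ‖if y < (m : ℝ) + 1 then u m else 0‖ := norm_tsum_le_tsum_norm hsum
    _ ≤ ∑' m, v m / y ^ β := hsum.tsum_le_tsum hterm (hv.div_const _)
    _ = (∑' m, v m) / y ^ β := tsum_div_const

end Tail

theorem cConst_series_tail_general (f : ℕ → ℂ) (α : ℝ) (hα : 0 < α)
    (hf : Summable fun n : ℕ => ‖f (n + 1)‖ / (n + 1 : ℝ) ^ (1 - α))
    (a : ℤ) :
    Summable (fun m : ℕ => ‖f (m + 1) * (cConst a (m + 1) : ℂ) / (m + 1)‖) ∧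
    ∃ C : ℝ, 0 < C ∧ ∀ y : ℝ, 2 ≤ y →
      ‖∑' m : ℕ, (if y < (m + 1 : ℝ) then
          f (m + 1) * (cConst a (m + 1) : ℂ) / (m + 1) else 0)‖ ≤
      C / y ^ (α / 2) := by
  obtain ⟨D, hD, hc⟩ := exists_abs_cConst_le_mul_rpow a (half_pos hα)
  set v : ℕ → ℝ := fun m => D * (‖f (m + 1)‖ / ((m : ℝ) + 1) ^ (1 - α))
  have hv : Summable v := hf.mul_left D
  have hterm : ∀ m : ℕ, ‖f (m + 1) * (cConst a (m + 1) : ℂ) / (m + 1)‖ ≤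
      v m / ((m : ℝ) + 1) ^ (α / 2) := fun m => by
    have hc' := hc (m + 1) m.succ_ne_zero
    push_cast at hc'
    have h := norm_mul_div_le_of_abs_le_mul_rpow (z := f (m + 1)) (by positivity) hc'
    push_cast at h
    exact h
  refine ⟨summable_norm_of_le_div_rpow hv (by positivity) hterm,
    (∑' m, v m) + 1, by positivity, fun y hy => ?_⟩
  refine (norm_tsum_ite_lt_le_div_rpow hv (by positivity) hterm (by linarith)).trans ?_
  gcongr
  linarith

theorem cConst_series_tail (f : ℕ → ℂ) (α : ℝ) (hα : 0 < α)
    (hf : Summable fun n : ℕ => ‖f (n + 1)‖ / (n + 1 : ℝ) ^ (1 - α))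
    (a : ℤ) (ha : a ≠ 0) :
    Summable (fun m : ℕ => ‖f (m + 1) * (cConst a (m + 1) : ℂ) / (m + 1)‖) ∧
    ∃ C : ℝ, 0 < C ∧ ∀ y : ℝ, 2 ≤ y →
      ‖∑' m : ℕ, (if y < (m + 1 : ℝ) then
          f (m + 1) * (cConst a (m + 1) : ℂ) / (m + 1) else 0)‖ ≤
      C / y ^ (α / 2) :=
  cConst_series_tail_general f α hα hf a
end
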